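/- Let (f_k)_{k∈ℕ} be a frame sequence in H with frame operator S = T T*, and let S† be the Moore-Penrose pseudoinverse of S. Then for every f ∈ H, Pf = ∑_k ⟨f, S†f_k⟩ f_k, with the series converging in H. -/

import Mathlib

/- Setting: `H` is a complex Hilbert space, `ℓ2` is the Hilbert space of square-summable
complex sequences with standard orthonormal basis `lp.single 2 k 1`. -/

noncomputable section

abbrev ℓ2 : Type := lp (fun _ : ℕ => ℂ) 2

variable {H : Type} [NormedAddCommGroup H] [InnerProductSpace ℂ H] [CompleteSpace H]

/-- The closed linear span `V` of the set of values of the sequence `f`. -/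
def spanClosure (f : ℕ → H) : Submodule ℂ H :=
  (Submodule.span ℂ (Set.range f)).topologicalClosure

instance (f : ℕ → H) : CompleteSpace (spanClosure f) :=
  Submodule.topologicalClosure.completeSpace _

/-- `f` is a frame sequence with frame bounds `A`, `B`:  the frame inequality
`A‖g‖² ≤ ∑ₖ |⟨g, fₖ⟩|² ≤ B‖g‖²` holds for every `g` in the closed linear span `V` of the `fₖ`.
(In Mathlib's convention, the paper's `⟨g, fₖ⟩`, linear in the first argument, is `⟪fₖ, g⟫`.) -/
def IsFrameSeqWith (f : ℕ → H) (A B : ℝ) : Prop :=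
  0 < A ∧ 0 < B ∧
    ∀ g ∈ spanClosure f,
      Summable (fun k => ‖(inner ℂ (f k) g : ℂ)‖ ^ 2) ∧
      A * ‖g‖ ^ 2 ≤ ∑' k, ‖(inner ℂ (f k) g : ℂ)‖ ^ 2 ∧
      (∑' k, ‖(inner ℂ (f k) g : ℂ)‖ ^ 2) ≤ B * ‖g‖ ^ 2

/-- The orthogonal projection `P` of `H` onto `V`, as an operator `H → H`. -/
def projV (f : ℕ → H) : H →L[ℂ] H :=
  (spanClosure f).subtypeL ∘L Submodule.orthogonalProjection (spanClosure f)

/-- `Ad` is the Moore–Penrose pseudoinverse of the bounded operator `A`: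
`A A† A = A`, `A† A A† = A†`, `(A A†)* = A A†` and `(A† A)* = A† A`. -/
def IsMoorePenrose {E F : Type} [NormedAddCommGroup E] [InnerProductSpace ℂ E] [CompleteSpace E]
    [NormedAddCommGroup F] [InnerProductSpace ℂ F] [CompleteSpace F]
    (A : E →L[ℂ] F) (Ad : F →L[ℂ] E) : Prop :=
  A ∘L Ad ∘L A = A ∧ Ad ∘L A ∘L Ad = Ad ∧
  ContinuousLinearMap.adjoint (A ∘L Ad) = A ∘L Ad ∧
  ContinuousLinearMap.adjoint (Ad ∘L A) = Ad ∘L A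

/-! The coefficients `⟪S†fₖ, g⟫ = ⟪fₖ, S†* g⟫` are the coordinates of `T* S†* g`, so the series
sums to `T T* S†* g = S S†* g = (S†S)* g = S†S g`. This vector lies in `range T ⊆ V`, while
`S (g - S†S g) = 0` and `ker S = ker T* = Vᗮ`; hence `S†S g` is the orthogonal projection of `g`
onto `V`. -/

open ContinuousLinearMap Submodule

lemma mem_orthogonal_span_range_iff {E ι : Type} [NormedAddCommGroup E] [InnerProductSpace ℂ E]
    (v : ι → E) (x : E) :
    x ∈ (span ℂ (Set.range v))ᗮ ↔ ∀ i, inner ℂ (v i) x = 0 := by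
  rw [← span_singleton_le_iff_mem, ← isOrtho_iff_le, isOrtho_comm, isOrtho_iff_le, span_le,
    Set.range_subset_iff]
  simp only [SetLike.mem_coe, mem_orthogonal_singleton_iff_inner_left]

section MoorePenrose

variable {E F : Type} [NormedAddCommGroup E] [InnerProductSpace ℂ E] [CompleteSpace E]
  [NormedAddCommGroup F] [InnerProductSpace ℂ F] [CompleteSpace F]

lemma IsMoorePenrose.adjoint_comp_adjoint {A : E →L[ℂ] F} {Ad : F →L[ℂ] E}
    (h : IsMoorePenrose A Ad) : adjoint A ∘L adjoint Ad = Ad ∘L A := by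
  rw [← adjoint_comp]
  exact h.2.2.2

theorem IsMoorePenrose.comp_self_comp_adjoint_eq_starProjection {T : E →L[ℂ] F}
    {Sd : F →L[ℂ] F} (h : IsMoorePenrose (T ∘L adjoint T) Sd) (K : Submodule ℂ F)
    [K.HasOrthogonalProjection] (hK : (adjoint T).ker = Kᗮ) :
    Sd ∘L (T ∘L adjoint T) = K.starProjection := by
  ext g
  refine (eq_starProjection_of_mem_of_inner_eq_zero ?_ fun w hw => ?_).symm
  · have hrange : T.range ≤ K := by
      rw [← K.orthogonal_orthogonal, ← hK, ← orthogonal_range]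
      exact le_orthogonal_orthogonal _
    have hSd : (Sd ∘L (T ∘L adjoint T)) g = T (adjoint T (adjoint Sd g)) := by
      rw [← h.adjoint_comp_adjoint, adjoint_comp, adjoint_adjoint]
      rfl
    exact hrange ⟨_, hSd.symm⟩
  · have hker : g - Sd (T (adjoint T g)) ∈ (T ∘L adjoint T).ker := by
      simpa [sub_eq_zero] using congr($(h.1) g).symm
    rw [ker_self_comp_adjoint, hK] at hker
    exact inner_left_of_mem_orthogonal hw hker

end MoorePenrose

lemma synthesis_single {E : Type} [NormedAddCommGroup E] [NormedSpace ℂ E] {f : ℕ → E}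
    {T : ℓ2 →L[ℂ] E} (hT : ∀ c : ℓ2, HasSum (fun k => c k • f k) (T c)) (k : ℕ) :
    T (lp.single 2 k 1) = f k := by
  refine (hT _).unique ?_
  convert hasSum_ite_eq k (f k) using 2 with j
  by_cases hj : j = k
  · subst hj
    simp
  · simp [hj]

section Synthesis

variable {f : ℕ → H} {T : ℓ2 →L[ℂ] H}

lemma adjoint_synthesis_apply (hT : ∀ c : ℓ2, HasSum (fun k => c k • f k) (T c)) (h : H)
    (k : ℕ) : adjoint T h k = inner ℂ (f k) h := by
  rw [← synthesis_single hT, ← adjoint_inner_right, lp.inner_single_left]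
  simp

lemma ker_adjoint_synthesis (hT : ∀ c : ℓ2, HasSum (fun k => c k • f k) (T c)) :
    (adjoint T).ker = (spanClosure f)ᗮ := by
  ext h
  rw [spanClosure, orthogonal_closure, mem_orthogonal_span_range_iff, LinearMap.mem_ker, coe_coe,
    lp.ext_iff, funext_iff]
  simp only [← adjoint_synthesis_apply hT]
  rfl

end Synthesis

theorem stmt10_general (f : ℕ → H)
    (T : ℓ2 →L[ℂ] H) (hT : ∀ c : ℓ2, HasSum (fun k => c k • f k) (T c))
    (S : H →L[ℂ] H) (hS : S = T ∘L ContinuousLinearMap.adjoint T)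
    (Sdag : H →L[ℂ] H) (hSdag : IsMoorePenrose S Sdag) (g : H) :
    HasSum (fun k => (inner ℂ (Sdag (f k)) g : ℂ) • f k) (projV f g) := by
  subst hS
  have hP : projV f = Sdag ∘L (T ∘L adjoint T) :=
    (hSdag.comp_self_comp_adjoint_eq_starProjection _ (ker_adjoint_synthesis hT)).symm
  have hcoef (k : ℕ) : inner ℂ (Sdag (f k)) g = adjoint T (adjoint Sdag g) k := by
    rw [adjoint_synthesis_apply hT, adjoint_inner_right]
  rw [hP, ← hSdag.adjoint_comp_adjoint, adjoint_comp, adjoint_adjoint]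
  simp only [hcoef]
  exact hT (adjoint T (adjoint Sdag g))

/-- for a frame sequence with frame operator `S = T T*` and `S†` the
Moore-Penrose pseudoinverse of `S`: for every `g ∈ H`, `Pg = ∑ₖ ⟨g, S†fₖ⟩ fₖ`,
the series converging in `H`.  (The paper's `⟨g, S†fₖ⟩`, linear in the first
argument, is Mathlib's `⟪S†fₖ, g⟫`.) -/
theorem stmt10 (f : ℕ → H) (A B : ℝ) (hF : IsFrameSeqWith f A B)
    (T : ℓ2 →L[ℂ] H) (hT : ∀ c : ℓ2, HasSum (fun k => c k • f k) (T c))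
    (S : H →L[ℂ] H) (hS : S = T ∘L ContinuousLinearMap.adjoint T)
    (Sdag : H →L[ℂ] H) (hSdag : IsMoorePenrose S Sdag) (g : H) :
    HasSum (fun k => (inner ℂ (Sdag (f k)) g : ℂ) • f k) (projV f g) :=
  stmt10_general f T hT S hS Sdag hSdag g

end
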